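/- Fix β > 1, θ₀ ∈ ℝ^d, m the positive root of m = tanh(βm), and P_{θ₀} = ((1+m)/2)N_d(θ₀,I_d) + ((1−m)/2)N_d(−θ₀,I_d). Then E_{P_{θ₀}}[X tanh(βm + θ₀ᵀX)] = θ₀. -/

import Mathlib

open MeasureTheory
open scoped RealInnerProductSpace ENNReal

/-- The multivariate Gaussian measure `N_d(μ, I_d)` on `ℝ^d`. -/
noncomputable def gaussian (d : ℕ) (μ : EuclideanSpace ℝ (Fin d)) :
    Measure (EuclideanSpace ℝ (Fin d)) :=
  volume.withDensity
    (fun x => ENNReal.ofReal ((2 * Real.pi) ^ (-(d : ℝ) / 2) * Real.exp (-‖x - μ‖ ^ 2 / 2)))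

/-- The asymmetric two-component Gaussian mixture
`P_{θ₀} = ((1+m)/2) N_d(θ₀, I_d) + ((1−m)/2) N_d(−θ₀, I_d)`. -/
noncomputable def asymMix (d : ℕ) (θ₀ : EuclideanSpace ℝ (Fin d)) (m : ℝ) :
    Measure (EuclideanSpace ℝ (Fin d)) :=
  ENNReal.ofReal ((1 + m) / 2) • gaussian d θ₀ + ENNReal.ofReal ((1 - m) / 2) • gaussian d (-θ₀)

/-! For `m = tanh a`, the mixture density `((1+m)/2) φ(x-θ) + ((1-m)/2) φ(x+θ)` equals
`φ(x) e^{-‖θ‖²/2} cosh(a + ⟪θ, x⟫) / cosh a`, so multiplying it by `tanh(a + ⟪θ, x⟫)` gives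
the signed combination `((1+m)/2) φ(x-θ) - ((1-m)/2) φ(x+θ)`. Its first moment is
`((1+m)/2) θ + ((1-m)/2) θ = θ`; the theorem is the case `a = β m`. -/

open Real

theorem Real.tanh_add_mul_exp_add_exp_neg (a t : ℝ) :
    tanh (a + t) * ((1 + tanh a) * exp t + (1 - tanh a) * exp (-t)) =
      (1 + tanh a) * exp t - (1 - tanh a) * exp (-t) := by
  have hc : cosh a ≠ 0 := (cosh_pos a).ne'
  have hct : cosh (a + t) ≠ 0 := (cosh_pos _).ne'
  simp only [tanh_eq_sinh_div_cosh, sinh_eq, cosh_eq] at hc hct ⊢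
  field_simp
  simp only [exp_add, exp_neg]
  field_simp
  ring

section
variable {V : Type*} [NormedAddCommGroup V] [InnerProductSpace ℝ V] [FiniteDimensional ℝ V]
  [MeasurableSpace V] [BorelSpace V]

theorem integrable_exp_neg_mul_sq_norm {b : ℝ} (hb : 0 < b) :
    Integrable (fun x : V => exp (-b * ‖x‖ ^ 2)) := by
  simpa [← Complex.ofReal_pow, Complex.norm_exp] using
    (GaussianFourier.integrable_cexp_neg_mul_sq_norm_add (V := V) (b := (b : ℂ))
      (by simpa using hb) 0 0).norm

theorem integrable_exp_neg_sq_norm_div_two : Integrable (fun x : V => exp (-‖x‖ ^ 2 / 2)) := by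
  simpa [neg_div, div_eq_inv_mul, mul_comm] using
    integrable_exp_neg_mul_sq_norm (V := V) (b := 1/2) (by norm_num)

theorem integrable_exp_neg_sq_norm_div_two_smul :
    Integrable (fun x : V => exp (-‖x‖ ^ 2 / 2) • x) := by
  refine (integrable_exp_neg_mul_sq_norm (V := V) (b := 1/4) (by norm_num)).mono'
    (by fun_prop) (Filter.Eventually.of_forall fun x => ?_)
  have hx : ‖x‖ ≤ exp (‖x‖ ^ 2 / 4) := by
    nlinarith [add_one_le_exp (‖x‖ ^ 2 / 4), sq_nonneg (‖x‖ - 2)]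
  calc ‖exp (-‖x‖ ^ 2 / 2) • x‖ = exp (-‖x‖ ^ 2 / 2) * ‖x‖ := by
        rw [norm_smul, norm_of_nonneg (exp_pos _).le]
    _ ≤ exp (-‖x‖ ^ 2 / 2) * exp (‖x‖ ^ 2 / 4) := by gcongr
    _ = exp (-(1/4) * ‖x‖ ^ 2) := by rw [← exp_add]; ring_nf

theorem integral_exp_neg_sq_norm_div_two :
    ∫ x : V, exp (-‖x‖ ^ 2 / 2) = (2 * π) ^ ((Module.finrank ℝ V : ℝ) / 2) := by
  have h := GaussianFourier.integral_rexp_neg_mul_sq_norm (V := V) (b := 1/2) (by norm_num)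
  rw [div_div_eq_mul_div, div_one, mul_comm] at h
  simpa [neg_div, div_eq_inv_mul] using h

theorem integral_exp_neg_sq_norm_div_two_smul :
    ∫ x : V, exp (-‖x‖ ^ 2 / 2) • x = 0 := by
  have h := integral_neg_eq_self (fun x : V => exp (-‖x‖ ^ 2 / 2) • x) volume
  simp only [norm_neg, smul_neg, integral_neg] at h
  have : IsAddTorsionFree V := .of_isTorsionFree ℝ V
  exact self_eq_neg.mp h.symm

theorem integrable_exp_neg_sq_norm_sub_div_two_smul (μ : V) :
    Integrable (fun x : V => exp (-‖x - μ‖ ^ 2 / 2) • x) := by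
  have h : Integrable (fun y : V => exp (-‖y‖ ^ 2 / 2) • (y + μ)) := by
    simp_rw [smul_add]
    exact integrable_exp_neg_sq_norm_div_two_smul.add
      (integrable_exp_neg_sq_norm_div_two.smul_const μ)
  simpa only [sub_add_cancel] using h.comp_sub_right μ

theorem integral_exp_neg_sq_norm_sub_div_two_smul (μ : V) :
    ∫ x : V, exp (-‖x - μ‖ ^ 2 / 2) • x
      = (2 * π) ^ ((Module.finrank ℝ V : ℝ) / 2) • μ := by
  calc ∫ x : V, exp (-‖x - μ‖ ^ 2 / 2) • x
      = ∫ y : V, (exp (-‖y‖ ^ 2 / 2) • y + exp (-‖y‖ ^ 2 / 2) • μ) := by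
        rw [← integral_add_right_eq_self _ μ]
        simp only [add_sub_cancel_right, smul_add]
    _ = (2 * π) ^ ((Module.finrank ℝ V : ℝ) / 2) • μ := by
        rw [integral_add integrable_exp_neg_sq_norm_div_two_smul
          (integrable_exp_neg_sq_norm_div_two.smul_const μ), integral_exp_neg_sq_norm_div_two_smul,
          integral_smul_const, integral_exp_neg_sq_norm_div_two, zero_add]
end

theorem integral_withDensity_ofReal_eq_integral_smul {X E : Type*} [MeasurableSpace X]
    [NormedAddCommGroup E] [NormedSpace ℝ E] {μ : Measure X} {f : X → ℝ} (hf : Measurable f)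
    (hf₀ : ∀ x, 0 ≤ f x) (g : X → E) :
    ∫ x, g x ∂μ.withDensity (fun x => ENNReal.ofReal (f x)) = ∫ x, f x • g x ∂μ := by
  rw [integral_withDensity_eq_integral_toReal_smul hf.ennreal_ofReal
    (Filter.Eventually.of_forall fun _ => ENNReal.ofReal_lt_top)]
  simp only [ENNReal.toReal_ofReal (hf₀ _)]

section
variable {d : ℕ}

noncomputable def gaussianPDF (d : ℕ) (μ x : EuclideanSpace ℝ (Fin d)) : ℝ :=
  (2 * π) ^ (-(d : ℝ) / 2) * exp (-‖x - μ‖ ^ 2 / 2)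

theorem gaussianPDF_nonneg (μ x : EuclideanSpace ℝ (Fin d)) : 0 ≤ gaussianPDF d μ x := by
  unfold gaussianPDF; positivity

@[fun_prop]
theorem measurable_gaussianPDF (μ : EuclideanSpace ℝ (Fin d)) : Measurable (gaussianPDF d μ) := by
  unfold gaussianPDF; fun_prop

theorem integrable_gaussianPDF_smul (μ : EuclideanSpace ℝ (Fin d)) :
    Integrable (fun x => gaussianPDF d μ x • x) := by
  simp only [gaussianPDF, mul_smul]
  exact (integrable_exp_neg_sq_norm_sub_div_two_smul μ).smul ((2 * π) ^ (-(d : ℝ) / 2))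

theorem integral_gaussianPDF_smul (μ : EuclideanSpace ℝ (Fin d)) :
    ∫ x, gaussianPDF d μ x • x = μ := by
  simp only [gaussianPDF, mul_smul]
  rw [integral_smul, integral_exp_neg_sq_norm_sub_div_two_smul, smul_smul,
    ← rpow_add (by positivity), finrank_euclideanSpace_fin,
    neg_div, neg_add_cancel, rpow_zero, one_smul]

theorem gaussianPDF_eq_mul_exp_inner (θ x : EuclideanSpace ℝ (Fin d)) :
    gaussianPDF d θ x = exp (-‖θ‖ ^ 2 / 2) * gaussianPDF d 0 x * exp ⟪θ, x⟫ := by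
  simp only [gaussianPDF, sub_zero, norm_sub_sq_real, real_inner_comm x θ]
  rw [mul_left_comm, mul_assoc, ← exp_add, ← exp_add]
  ring_nf

noncomputable def asymMixPDF (d : ℕ) (θ : EuclideanSpace ℝ (Fin d)) (m : ℝ)
    (x : EuclideanSpace ℝ (Fin d)) : ℝ :=
  (1 + m) / 2 * gaussianPDF d θ x + (1 - m) / 2 * gaussianPDF d (-θ) x

theorem asymMixPDF_nonneg {m : ℝ} (hm₁ : -1 ≤ m) (hm₂ : m ≤ 1) (θ x : EuclideanSpace ℝ (Fin d)) :
    0 ≤ asymMixPDF d θ m x :=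
  add_nonneg (mul_nonneg (by linarith) (gaussianPDF_nonneg θ x))
    (mul_nonneg (by linarith) (gaussianPDF_nonneg (-θ) x))

theorem asymMix_eq_withDensity {m : ℝ} (hm₁ : -1 ≤ m) (hm₂ : m ≤ 1) (θ : EuclideanSpace ℝ (Fin d)) :
    asymMix d θ m = volume.withDensity (fun x => ENNReal.ofReal (asymMixPDF d θ m x)) := by
  have h₁ : 0 ≤ (1 + m) / 2 := by linarith
  have h₂ : 0 ≤ (1 - m) / 2 := by linarith
  change _ • volume.withDensity (fun x => ENNReal.ofReal (gaussianPDF d θ x)) +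
    _ • volume.withDensity (fun x => ENNReal.ofReal (gaussianPDF d (-θ) x)) = _
  rw [← withDensity_smul' _ _ ENNReal.ofReal_ne_top, ← withDensity_smul' _ _ ENNReal.ofReal_ne_top,
    ← withDensity_add_left ((measurable_gaussianPDF θ).ennreal_ofReal.const_smul _)]
  congr 1
  funext x
  simp only [asymMixPDF, Pi.add_apply, Pi.smul_apply, smul_eq_mul,
    ← ENNReal.ofReal_mul h₁, ← ENNReal.ofReal_mul h₂]
  rw [ENNReal.ofReal_add (mul_nonneg h₁ (gaussianPDF_nonneg θ x))
    (mul_nonneg h₂ (gaussianPDF_nonneg (-θ) x))]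

theorem tanh_mul_asymMixPDF (a : ℝ) (θ x : EuclideanSpace ℝ (Fin d)) :
    tanh (a + ⟪θ, x⟫) * asymMixPDF d θ (tanh a) x
      = (1 + tanh a) / 2 * gaussianPDF d θ x - (1 - tanh a) / 2 * gaussianPDF d (-θ) x := by
  simp only [asymMixPDF, gaussianPDF_eq_mul_exp_inner θ, gaussianPDF_eq_mul_exp_inner (-θ),
    norm_neg, inner_neg_left]
  linear_combination (exp (-‖θ‖ ^ 2 / 2) * gaussianPDF d 0 x / 2) *
    tanh_add_mul_exp_add_exp_neg a ⟪θ, x⟫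

theorem integral_tanh_smul_asymMix (a : ℝ) (θ : EuclideanSpace ℝ (Fin d)) :
    ∫ x, tanh (a + ⟪θ, x⟫) • x ∂asymMix d θ (tanh a) = θ := by
  have hm₁ : -1 ≤ tanh a := (neg_one_lt_tanh a).le
  have hm₂ : tanh a ≤ 1 := (tanh_lt_one a).le
  have hpdf : Measurable (asymMixPDF d θ (tanh a)) := by unfold asymMixPDF; fun_prop
  have hθ : Integrable fun x => ((1 + tanh a) / 2) • (gaussianPDF d θ x • x) :=
    (integrable_gaussianPDF_smul θ).smul ((1 + tanh a) / 2)
  have hnegθ : Integrable fun x => ((1 - tanh a) / 2) • (gaussianPDF d (-θ) x • x) :=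
    (integrable_gaussianPDF_smul (-θ)).smul ((1 - tanh a) / 2)
  rw [asymMix_eq_withDensity hm₁ hm₂, integral_withDensity_ofReal_eq_integral_smul hpdf
    (asymMixPDF_nonneg hm₁ hm₂ θ)]
  calc ∫ x, asymMixPDF d θ (tanh a) x • tanh (a + ⟪θ, x⟫) • x
      = ∫ x, (((1 + tanh a) / 2) • (gaussianPDF d θ x • x)
          - ((1 - tanh a) / 2) • (gaussianPDF d (-θ) x • x)) := by
        refine integral_congr_ae (Filter.Eventually.of_forall fun x => ?_)
        simp only [smul_smul, mul_comm (asymMixPDF _ _ _ x), tanh_mul_asymMixPDF, sub_smul]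
    _ = ((1 + tanh a) / 2) • θ - ((1 - tanh a) / 2) • (-θ) := by
        rw [integral_sub hθ hnegθ, integral_smul, integral_smul, integral_gaussianPDF_smul,
          integral_gaussianPDF_smul]
    _ = θ := by module
end

theorem asymMix_x_tanh_mean_general (d : ℕ) (β m : ℝ) (θ₀ : EuclideanSpace ℝ (Fin d))
    (hfix : m = Real.tanh (β * m)) :
    ∫ x, Real.tanh (β * m + ⟪θ₀, x⟫) • x ∂(asymMix d θ₀ m) = θ₀ := by
  have h := integral_tanh_smul_asymMix (β * m) θ₀
  rwa [← hfix] at h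

/-- with `β > 1`, `m` the positive root of `m = tanh(βm)` and `P_{θ₀}` the
weighted mixture with weights `(1±m)/2`, one has `E_{P_{θ₀}}[X tanh(βm + θ₀ᵀX)] = θ₀`. -/
theorem asymMix_x_tanh_mean (d : ℕ) (β m : ℝ) (θ₀ : EuclideanSpace ℝ (Fin d))
    (hβ : 1 < β) (hm : 0 < m) (hfix : m = Real.tanh (β * m)) :
    ∫ x, Real.tanh (β * m + ⟪θ₀, x⟫) • x ∂(asymMix d θ₀ m) = θ₀ :=
  asymMix_x_tanh_mean_general d β m θ₀ hfix
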